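/- Let k ≥ 2, let S be a (possibly empty) sequence over the alphabet {1,…,k−1}, and let τ be the canonical sequence of a partition. Then the pattern 12⋯k(τ+k)S is equivalent to the pattern 12⋯k(τ+k)(S+1), and the pattern 12⋯kS(τ+k) is equivalent to the pattern 12⋯k(S+1)(τ+k). -/

import Mathlib

/-- `π` is the canonical sequence of a set partition: every entry is at least 1,
and each entry is at most one more than the maximum of the preceding entries
(so the first entry is 1). -/
def IsCanonicalSeq (π : List ℕ) : Prop :=
  ∀ i (h : i < π.length), 1 ≤ π.get ⟨i, h⟩ ∧ π.get ⟨i, h⟩ ≤ (π.take i).foldr max 0 + 1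

/-- `π` contains the pattern `σ`: there is a subsequence of `π`
order-isomorphic to `σ`. -/
def ContainsPat (π σ : List ℕ) : Prop :=
  ∃ f : Fin σ.length → Fin π.length, StrictMono f ∧
    ∀ i j : Fin σ.length, σ.get i < σ.get j ↔ π.get (f i) < π.get (f j)

/-- `π` avoids the pattern `σ`. -/
def AvoidsPat (π σ : List ℕ) : Prop := ¬ ContainsPat π σ

/-- `pAvoid n σ` is the number of canonical sequences of partitions of `[n]`
avoiding the pattern `σ`. -/
noncomputable def pAvoid (n : ℕ) (σ : List ℕ) : ℕ :=
  Set.ncard {π : List ℕ | π.length = n ∧ IsCanonicalSeq π ∧ AvoidsPat π σ}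

/-- Two patterns are equivalent if they have the same number of avoiders of
each size. -/
def PatEquiv (σ σ' : List ℕ) : Prop := ∀ n, pAvoid n σ = pAvoid n σ'

/-- The increasing sequence `1, 2, …, k`. -/
def iota (k : ℕ) : List ℕ := (List.range k).map (· + 1)

/-!
Both equivalences come from one bijection `shift τ s` on canonical sequences of each length. At a
position `p`, let `V p` be the largest `v ≤ max (π₁, …, π_{p-1})` such that a copy of `τ` using
only values above `v` lies before `p` (for `12⋯k(τ+k)S`) or after `p` (for `12⋯kS(τ+k)`);
`shift` rotates the values `1, …, V p` at `p` upward (`x ↦ x + 1`, `V p ↦ 1`). Left-to-right maxima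
exceed `V p`, so the result is again canonical; entries above the threshold do not move, so the
copies of `τ`, and with them `V`, are unchanged. Hence `shift` is injective, and therefore a
bijection of the finite set of canonical sequences of length `n`.

In a canonical sequence the `12⋯k` of an occurrence may be placed at the first occurrences of its
values `a₁ < ⋯ < a_k`. The letters of `S` then take values `a_x < a_k ≤ V`, which `shift` raises by
one, while a copy of `τ` above `a_k` survives: an occurrence of `12⋯k(τ+k)S` in `π` becomes one of
`12⋯k(τ+k)(S+1)` in `shift π` on the values `1 < a₁ + 1 < ⋯ < a_{k-1} + 1`, and conversely.
-/

open Set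

/-- The `i`-th entry of `l`, and `0` past its end. -/
abbrev entry (l : List ℕ) (i : ℕ) : ℕ := l.getD i 0

def pmax (π : List ℕ) (i : ℕ) : ℕ := (π.take i).foldr max 0

lemma entry_eq_getElem {l : List ℕ} {i : ℕ} (h : i < l.length) : entry l i = l[i] :=
  List.getD_eq_getElem _ _ h

lemma entry_append_left {A B : List ℕ} {i : ℕ} (h : i < A.length) :
    entry (A ++ B) i = entry A i :=
  List.getD_append _ _ _ _ h

lemma entry_append_right {A B : List ℕ} {i : ℕ} (h : A.length ≤ i) :
    entry (A ++ B) i = entry B (i - A.length) :=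
  List.getD_append_right _ _ _ _ h

lemma entry_map_add {l : List ℕ} {c i : ℕ} (h : i < l.length) :
    entry (l.map (· + c)) i = entry l i + c := by
  rw [entry_eq_getElem (by simpa using h), entry_eq_getElem h, List.getElem_map]

@[simp] lemma length_iota (k : ℕ) : (iota k).length = k := by simp [iota]

lemma entry_iota {k i : ℕ} (h : i < k) : entry (iota k) i = i + 1 := by
  rw [entry_eq_getElem (by simpa using h)]
  simp [iota]

lemma entry_idxOf {π : List ℕ} {v : ℕ} (hv : v ∈ π) : entry π (π.idxOf v) = v := by
  rw [entry_eq_getElem (List.idxOf_lt_length_of_mem hv), List.getElem_idxOf]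

@[simp] lemma pmax_zero (π : List ℕ) : pmax π 0 = 0 := by simp [pmax]

lemma pmax_succ {π : List ℕ} {i : ℕ} (h : i < π.length) :
    pmax π (i + 1) = max (entry π i) (pmax π i) := by
  simp only [pmax, List.take_add_one, List.getElem?_eq_getElem h, Option.toList_some,
    List.foldr_append, List.foldr_cons, List.foldr_nil, entry_eq_getElem h]
  induction π.take i with
  | nil => simp
  | cons b t ih => simp only [List.foldr_cons, ih]; omega

lemma pmax_of_length_le {π : List ℕ} {i : ℕ} (h : π.length ≤ i) :
    pmax π i = pmax π π.length := by
  simp [pmax, List.take_of_length_le h]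

lemma pmax_mono (π : List ℕ) : Monotone (pmax π) := by
  refine monotone_nat_of_le_succ fun i => ?_
  rcases lt_or_ge i π.length with h | h
  · rw [pmax_succ h]; exact le_max_right _ _
  · rw [pmax_of_length_le h, pmax_of_length_le (i := i + 1) (by omega)]

lemma entry_le_pmax {π : List ℕ} {p q : ℕ} (hpq : p < q) (hp : p < π.length) :
    entry π p ≤ pmax π q :=
  (pmax_succ hp ▸ le_max_left _ _).trans (pmax_mono π hpq)

lemma pmax_le_pmax_length (π : List ℕ) (i : ℕ) : pmax π i ≤ pmax π π.length := by
  rcases le_total i π.length with h | h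
  · exact pmax_mono π h
  · rw [pmax_of_length_le h]

lemma isCanonicalSeq_iff {π : List ℕ} :
    IsCanonicalSeq π ↔ ∀ i < π.length, 1 ≤ entry π i ∧ entry π i ≤ pmax π i + 1 := by
  refine forall_congr' fun i => forall_congr' fun hi => ?_
  rw [entry_eq_getElem hi]
  rfl

namespace IsCanonicalSeq

variable {π : List ℕ} (hπ : IsCanonicalSeq π)
include hπ

lemma one_le_entry {i : ℕ} (hi : i < π.length) : 1 ≤ entry π i :=
  (isCanonicalSeq_iff.1 hπ i hi).1

lemma entry_le_pmax_succ {i : ℕ} (hi : i < π.length) : entry π i ≤ pmax π i + 1 :=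
  (isCanonicalSeq_iff.1 hπ i hi).2

lemma pmax_le (i : ℕ) : pmax π i ≤ i := by
  induction i with
  | zero => simp
  | succ i ih =>
    rcases lt_or_ge i π.length with h | h
    · rw [pmax_succ h]; have := hπ.entry_le_pmax_succ h; omega
    · rw [pmax_of_length_le (i := i + 1) (by omega), ← pmax_of_length_le h]; omega

lemma mem_take {v i : ℕ} (hv : 1 ≤ v) (hvi : v ≤ pmax π i) : v ∈ π.take i := by
  induction i with
  | zero => simp at hvi; omega
  | succ i ih =>
    rcases lt_or_ge i π.length with h | h
    · rw [List.take_add_one, List.getElem?_eq_getElem h, List.mem_append]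
      rw [pmax_succ h] at hvi
      by_cases hv' : v ≤ pmax π i
      · exact Or.inl (ih hv')
      · have := hπ.entry_le_pmax_succ h
        rw [entry_eq_getElem h] at this hvi
        exact Or.inr (by simp; omega)
    · rw [pmax_of_length_le (i := i + 1) (by omega), ← pmax_of_length_le h] at hvi
      rw [List.take_of_length_le (by omega), ← List.take_of_length_le h]
      exact ih hvi

lemma mem {v : ℕ} (hv : 1 ≤ v) (hvm : v ≤ pmax π π.length) : v ∈ π :=
  List.mem_of_mem_take (hπ.mem_take hv hvm)

lemma idxOf_lt {v q : ℕ} (hv : 1 ≤ v) (hvq : v ≤ pmax π q) : π.idxOf v < q := by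
  have hmem : v ∈ π := hπ.mem hv (hvq.trans (pmax_le_pmax_length π q))
  exact (List.mem_take_iff_idxOf_lt hmem).1 (hπ.mem_take hv hvq)

lemma pmax_idxOf {v : ℕ} (hv : 1 ≤ v) (hvm : v ≤ pmax π π.length) :
    pmax π (π.idxOf v) + 1 = v := by
  have hmem := hπ.mem hv hvm
  have hle := hπ.entry_le_pmax_succ (List.idxOf_lt_length_of_mem hmem)
  rw [entry_idxOf hmem] at hle
  have : ¬ v ≤ pmax π (π.idxOf v) := fun h => (hπ.idxOf_lt hv h).false
  omega

lemma idxOf_strictMonoOn : StrictMonoOn π.idxOf (Icc 1 (pmax π π.length)) := by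
  rintro u ⟨hu, -⟩ v ⟨hv, hvm⟩ huv
  show π.idxOf u < π.idxOf v
  exact hπ.idxOf_lt hu (by have := hπ.pmax_idxOf hv hvm; omega)

end IsCanonicalSeq

lemma finite_canonical (n : ℕ) : {π : List ℕ | π.length = n ∧ IsCanonicalSeq π}.Finite := by
  refine ((List.finite_length_eq (Fin (n + 1)) n).image (List.map Fin.val)).subset ?_
  rintro π ⟨hlen, hπ⟩
  refine ⟨π.map (Fin.ofNat (n + 1)), by simpa using hlen, ?_⟩
  rw [List.map_map]
  conv_rhs => rw [← List.map_id π]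
  refine List.map_congr_left fun x hx => ?_
  obtain ⟨i, hi, rfl⟩ := List.getElem_of_mem hx
  have := hπ.entry_le_pmax_succ hi
  have := hπ.pmax_le i
  rw [entry_eq_getElem hi] at *
  simp only [Function.comp_apply, Fin.val_ofNat, id_eq]
  exact Nat.mod_eq_of_lt (by omega)

def SameOrder (n : ℕ) (u w : ℕ → ℕ) : Prop := ∀ i < n, ∀ j < n, (u i < u j ↔ w i < w j)

def IsOccurrence (π σ : List ℕ) (e : ℕ → ℕ) : Prop :=
  StrictMonoOn e (Iio σ.length) ∧ (∀ i < σ.length, e i < π.length) ∧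
    SameOrder σ.length (entry σ) (fun i => entry π (e i))

lemma containsPat_iff_exists_isOccurrence {π σ : List ℕ} :
    ContainsPat π σ ↔ ∃ e, IsOccurrence π σ e := by
  constructor
  · rintro ⟨f, hf, hiso⟩
    refine ⟨fun i => if h : i < σ.length then f ⟨i, h⟩ else 0, ?_, ?_, ?_⟩
    · intro i hi j hj hij
      simp only [dif_pos (show i < σ.length from hi), dif_pos (show j < σ.length from hj)]
      exact hf (show (⟨i, hi⟩ : Fin σ.length) < ⟨j, hj⟩ from hij)
    · intro i hi
      simp [dif_pos hi]
    · intro i hi j hj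
      simpa [dif_pos hi, dif_pos hj, entry_eq_getElem, hi, hj] using hiso ⟨i, hi⟩ ⟨j, hj⟩
  · rintro ⟨e, he, hlen, hiso⟩
    refine ⟨fun i => ⟨e i, hlen i i.isLt⟩, fun i j hij => he i.isLt j.isLt hij, fun i j => ?_⟩
    simpa [entry_eq_getElem, hlen] using hiso i i.isLt j j.isLt

inductive Side
  | before
  | after

def Side.Rel : Side → ℕ → ℕ → Prop
  | .before, q, p => q < p
  | .after, q, p => p < q

lemma Side.rel_of_rel_of_not_rel {s : Side} {x p q : ℕ} (hx : s.Rel x q) (hp : ¬ s.Rel p q) :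
    s.Rel x p := by
  cases s <;> simp only [Side.Rel] at * <;> omega

lemma Side.Rel.asymm {s : Side} {p q : ℕ} (h : s.Rel q p) : ¬ s.Rel p q := by
  cases s <;> simp only [Side.Rel] at * <;> omega

def IsEmbAbove (τ π : List ℕ) (v : ℕ) (P : ℕ → Prop) (g : ℕ → ℕ) : Prop :=
  StrictMonoOn g (Iio τ.length) ∧
    (∀ x < τ.length, g x < π.length ∧ P (g x) ∧ v < entry π (g x)) ∧
    SameOrder τ.length (entry τ) (fun x => entry π (g x))

lemma IsEmbAbove.mono {τ π : List ℕ} {v v' : ℕ} {P P' : ℕ → Prop} {g : ℕ → ℕ}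
    (h : IsEmbAbove τ π v P g) (hv : v' ≤ v) (hP : ∀ q, P q → P' q) :
    IsEmbAbove τ π v' P' g :=
  ⟨h.1, fun x hx => ⟨(h.2.1 x hx).1, hP _ (h.2.1 x hx).2.1, by have := (h.2.1 x hx).2.2; omega⟩,
    h.2.2⟩

lemma IsEmbAbove.congr {τ π π' : List ℕ} {v : ℕ} {P : ℕ → Prop} {g : ℕ → ℕ}
    (h : IsEmbAbove τ π v P g) (hlen : π'.length = π.length)
    (heq : ∀ x < τ.length, entry π' (g x) = entry π (g x)) : IsEmbAbove τ π' v P g := by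
  refine ⟨h.1, fun x hx => ?_, fun x hx y hy => ?_⟩
  · rw [hlen, heq x hx]; exact h.2.1 x hx
  · show _ ↔ entry π' (g x) < entry π' (g y)
    rw [heq x hx, heq y hy]; exact h.2.2 x hx y hy

/-- In an occurrence of the pattern, the block `τ + k` is a copy of `τ` above the value `v` taken
by `k`. -/
def EmbedsAbove (τ : List ℕ) (s : Side) (π : List ℕ) (v p : ℕ) : Prop :=
  ∃ g, IsEmbAbove τ π v (s.Rel · p) g

section EmbedsAbove

variable {τ π : List ℕ} {s : Side} {v p : ℕ}

lemma EmbedsAbove.mono_value {v' : ℕ} (h : EmbedsAbove τ s π v p) (hv : v' ≤ v) :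
    EmbedsAbove τ s π v' p :=
  let ⟨g, hg⟩ := h; ⟨g, hg.mono hv fun _ hq => hq⟩

lemma EmbedsAbove.of_not_rel {q : ℕ} (h : EmbedsAbove τ s π v q) (hpq : ¬ s.Rel p q) :
    EmbedsAbove τ s π v p :=
  let ⟨g, hg⟩ := h; ⟨g, hg.mono le_rfl fun _ hx => Side.rel_of_rel_of_not_rel hx hpq⟩

lemma EmbedsAbove.exists_extremal (h : EmbedsAbove τ s π v p) :
    ∃ g, IsEmbAbove τ π v (s.Rel · p) g ∧ ∀ x < τ.length, ¬ EmbedsAbove τ s π v (g x) := by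
  classical
  cases s with
  | before =>
    have hex : ∃ r, EmbedsAbove τ .before π v r := ⟨p, h⟩
    obtain ⟨g, hg⟩ := Nat.find_spec hex
    refine ⟨g, hg.mono le_rfl fun q hq => ?_, fun x hx => Nat.find_min hex (hg.2.1 x hx).2.1⟩
    exact lt_of_lt_of_le hq (Nat.find_min' hex h)
  | after =>
    have hp : p ≤ max p π.length := le_max_left _ _
    obtain ⟨g, hg⟩ := Nat.findGreatest_spec hp h
    refine ⟨g, hg.mono le_rfl fun q hq => lt_of_le_of_lt (Nat.le_findGreatest hp h) hq,
      fun x hx => Nat.findGreatest_is_greatest (hg.2.1 x hx).2.1 ?_⟩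
    exact (hg.2.1 x hx).1.le.trans (le_max_right _ _)

end EmbedsAbove

section threshold

open Classical

noncomputable def threshold (τ : List ℕ) (s : Side) (π : List ℕ) (p : ℕ) : ℕ :=
  Nat.findGreatest (fun v => EmbedsAbove τ s π v p) (pmax π p)

variable {τ π : List ℕ} {s : Side} {v p : ℕ}

lemma threshold_le_pmax : threshold τ s π p ≤ pmax π p := Nat.findGreatest_le _

lemma le_threshold (hv : v ≤ pmax π p) (h : EmbedsAbove τ s π v p) : v ≤ threshold τ s π p :=
  Nat.le_findGreatest hv h

lemma embedsAbove_of_le_threshold (hv : 1 ≤ v) (h : v ≤ threshold τ s π p) :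
    EmbedsAbove τ s π v p :=
  (Nat.findGreatest_of_ne_zero (P := fun v => EmbedsAbove τ s π v p) (m := threshold τ s π p)
    rfl (by omega)).mono_value h

lemma threshold_mono {π' : List ℕ} (hpmax : pmax π p ≤ pmax π' p)
    (h : ∀ v, 1 ≤ v → EmbedsAbove τ s π v p → EmbedsAbove τ s π' v p) :
    threshold τ s π p ≤ threshold τ s π' p := by
  rcases Nat.eq_zero_or_pos (threshold τ s π p) with h0 | h0
  · omega
  · exact le_threshold (threshold_le_pmax.trans hpmax)
      (h _ h0 (embedsAbove_of_le_threshold h0 le_rfl))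

lemma threshold_lt (hv : 1 ≤ v) (h : ¬ EmbedsAbove τ s π v p) : threshold τ s π p < v :=
  lt_of_not_ge fun hle => h (embedsAbove_of_le_threshold hv hle)

end threshold

def cycleUp (m x : ℕ) : ℕ := if x < m then x + 1 else if x = m then 1 else x

section cycleUp

variable {m x : ℕ}

lemma cycleUp_of_lt (h : x < m) : cycleUp m x = x + 1 := if_pos h

lemma cycleUp_eq_self_of_lt (hx : 1 ≤ x) (h : m < x ∨ m < cycleUp m x) : cycleUp m x = x := by
  unfold cycleUp at *; split_ifs at * <;> omega

lemma cycleUp_le_max (hx : 1 ≤ x) : cycleUp m x ≤ max x m := by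
  unfold cycleUp; split_ifs <;> omega

lemma one_le_cycleUp : 1 ≤ cycleUp m x := by
  unfold cycleUp; split_ifs <;> omega

lemma eq_sub_one_of_cycleUp_eq {y : ℕ} (hx : 1 ≤ x) (h : cycleUp m x = y) (hy : 2 ≤ y)
    (hym : y ≤ m) : x = y - 1 := by
  unfold cycleUp at h; split_ifs at h <;> omega

lemma cycleUp_injOn : InjOn (cycleUp m) (Ici 1) := by
  intro x hx y hy h
  simp only [mem_Ici] at hx hy
  unfold cycleUp at h; split_ifs at h <;> omega

end cycleUp

def rotate (V : ℕ → ℕ) (π : List ℕ) : List ℕ := π.mapIdx fun p x => cycleUp (V p) x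

@[simp] lemma length_rotate (V : ℕ → ℕ) (π : List ℕ) : (rotate V π).length = π.length :=
  List.length_mapIdx

lemma entry_rotate {V : ℕ → ℕ} {π : List ℕ} {p : ℕ} (hp : p < π.length) :
    entry (rotate V π) p = cycleUp (V p) (entry π p) := by
  unfold rotate
  rw [entry_eq_getElem (by simpa using hp), entry_eq_getElem hp, List.getElem_mapIdx]

section rotate

variable {V : ℕ → ℕ} {π : List ℕ} (hπ : IsCanonicalSeq π)
include hπ

/-- Left-to-right maxima exceed `V`, so they are fixed, and every other entry stays below them. -/
lemma pmax_rotate (hV : ∀ p, V p ≤ pmax π p) (i : ℕ) : pmax (rotate V π) i = pmax π i := by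
  induction i with
  | zero => simp
  | succ i ih =>
    rcases lt_or_ge i π.length with h | h
    · rw [pmax_succ (by simpa using h), pmax_succ h, ih, entry_rotate h]
      have h1 := hπ.one_le_entry h
      have hVi := hV i
      rcases lt_or_ge (pmax π i) (entry π i) with hlt | hge
      · rw [cycleUp_eq_self_of_lt h1 (.inl (by omega))]
      · have := cycleUp_le_max (m := V i) h1
        omega
    · have h' : (rotate V π).length ≤ i := by simpa using h
      rw [pmax_of_length_le (Nat.le_succ_of_le h'), ← pmax_of_length_le h', ih,
        pmax_of_length_le h, pmax_of_length_le (Nat.le_succ_of_le h)]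

lemma isCanonicalSeq_rotate (hV : ∀ p, V p ≤ pmax π p) : IsCanonicalSeq (rotate V π) := by
  refine isCanonicalSeq_iff.2 fun i hi => ?_
  rw [length_rotate] at hi
  rw [entry_rotate hi, pmax_rotate hπ hV]
  have := cycleUp_le_max (m := V i) (hπ.one_le_entry hi)
  have := hπ.entry_le_pmax_succ hi
  have := hV i
  exact ⟨one_le_cycleUp, by omega⟩

omit hπ in
lemma rotate_injOn : InjOn (rotate V) {π | IsCanonicalSeq π} := by
  intro π hπ π' hπ' h
  have hlen : π.length = π'.length := by simpa using congrArg List.length h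
  refine List.ext_getElem hlen fun i hi hi' => ?_
  have := congrArg (entry · i) h
  simp only [entry_rotate hi, entry_rotate hi'] at this
  rw [← entry_eq_getElem hi, ← entry_eq_getElem hi']
  exact cycleUp_injOn (hπ.one_le_entry hi) (hπ'.one_le_entry hi') this

end rotate

noncomputable def shift (τ : List ℕ) (s : Side) (π : List ℕ) : List ℕ :=
  rotate (threshold τ s π) π

@[simp] lemma length_shift (τ : List ℕ) (s : Side) (π : List ℕ) :
    (shift τ s π).length = π.length :=
  length_rotate _ _

section shift

variable {τ π : List ℕ} {s : Side} (hπ : IsCanonicalSeq π)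
include hπ

lemma isCanonicalSeq_shift : IsCanonicalSeq (shift τ s π) :=
  isCanonicalSeq_rotate hπ fun _ => threshold_le_pmax

lemma pmax_shift (i : ℕ) : pmax (shift τ s π) i = pmax π i :=
  pmax_rotate hπ (fun _ => threshold_le_pmax) i

lemma entry_shift_of_threshold_lt {p : ℕ} (hp : p < π.length)
    (h : threshold τ s π p < entry π p ∨ threshold τ s π p < entry (shift τ s π) p) :
    entry (shift τ s π) p = entry π p := by
  simp only [shift, entry_rotate hp] at h ⊢
  exact cycleUp_eq_self_of_lt (hπ.one_le_entry hp) h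

/-- An embedding above `v` pushed as far from `p` as possible only uses positions whose threshold
is below `v`, and there `shift` moves no entry above the threshold. -/
lemma embedsAbove_shift_iff {v p : ℕ} (hv : 1 ≤ v) :
    EmbedsAbove τ s (shift τ s π) v p ↔ EmbedsAbove τ s π v p := by
  constructor
  · rintro ⟨g, hg⟩
    by_contra hno
    refine hno ⟨g, hg.congr (length_shift τ s π).symm fun x hx => ?_⟩
    obtain ⟨hlt, hrel, hval⟩ := hg.2.1 x hx
    have hthr := threshold_lt hv fun h => hno (h.of_not_rel hrel.asymm)
    exact (entry_shift_of_threshold_lt hπ (by simpa using hlt) (.inr (by omega))).symm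
  · intro h
    obtain ⟨g, hg, hext⟩ := h.exists_extremal
    refine ⟨g, hg.congr (length_shift τ s π) fun x hx => ?_⟩
    obtain ⟨hlt, -, hval⟩ := hg.2.1 x hx
    exact entry_shift_of_threshold_lt hπ hlt (.inl ((threshold_lt hv (hext x hx)).trans hval))

lemma threshold_shift : threshold τ s (shift τ s π) = threshold τ s π := by
  funext p
  refine le_antisymm (threshold_mono (pmax_shift hπ p).le fun v hv h => ?_)
    (threshold_mono (pmax_shift hπ p).ge fun v hv h => ?_)
  · exact (embedsAbove_shift_iff hπ hv).1 h
  · exact (embedsAbove_shift_iff hπ hv).2 h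

end shift

lemma shift_injOn (τ : List ℕ) (s : Side) : InjOn (shift τ s) {π | IsCanonicalSeq π} := by
  intro π hπ π' hπ' h
  have hV : threshold τ s π = threshold τ s π' := by
    rw [← threshold_shift hπ, h, threshold_shift hπ']
  exact rotate_injOn hπ hπ' (by simpa only [shift, hV] using h)

/-- An injective self-map of the finite set of canonical sequences of length `n` is onto, so
it carries the avoiders of `σ` onto the avoiders of `σ'`. -/
lemma pAvoid_eq_of_injOn {σ σ' : List ℕ} (Φ : List ℕ → List ℕ)
    (hlen : ∀ π, (Φ π).length = π.length)
    (hcan : ∀ π, IsCanonicalSeq π → IsCanonicalSeq (Φ π))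
    (hinj : InjOn Φ {π | IsCanonicalSeq π})
    (hcont : ∀ π, IsCanonicalSeq π → (ContainsPat π σ ↔ ContainsPat (Φ π) σ')) (n : ℕ) :
    pAvoid n σ = pAvoid n σ' := by
  set C := {π : List ℕ | π.length = n ∧ IsCanonicalSeq π}
  set A := {π : List ℕ | π.length = n ∧ IsCanonicalSeq π ∧ AvoidsPat π σ}
  have hmaps : MapsTo Φ C C := fun π hπ => ⟨(hlen π).trans hπ.1, hcan π hπ.2⟩
  have hbij := ((finite_canonical n).injOn_iff_bijOn_of_mapsTo hmaps).1
    (hinj.mono fun π hπ => hπ.2)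
  have himage : Φ '' A = {π | π.length = n ∧ IsCanonicalSeq π ∧ AvoidsPat π σ'} := by
    ext ρ
    constructor
    · rintro ⟨π, ⟨hn, hπ, havoid⟩, rfl⟩
      exact ⟨(hlen π).trans hn, hcan π hπ, fun h => havoid ((hcont π hπ).2 h)⟩
    · rintro ⟨hn, hρ, havoid⟩
      obtain ⟨π, ⟨hn', hπ⟩, rfl⟩ := hbij.surjOn ⟨hn, hρ⟩
      exact ⟨π, ⟨hn', hπ, fun h => havoid ((hcont π hπ).1 h)⟩, rfl⟩
  rw [pAvoid, pAvoid, ← himage, (hinj.mono fun π (hπ : π ∈ A) => hπ.2.1).ncard_image]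

lemma entry_iota_append (k : ℕ) (X : List ℕ) (i : ℕ) :
    entry (iota k ++ X) i = if i < k then i + 1 else entry X (i - k) := by
  split_ifs with h
  · rw [entry_append_left (by simpa using h), entry_iota h]
  · rw [entry_append_right (by simp; omega), length_iota]

lemma sameOrder_of_levels {n k : ℕ} {a u w : ℕ → ℕ} (ha : StrictMonoOn a (Iio k))
    (hu : ∀ i < n, 1 ≤ u i)
    (hsmall : ∀ i < n, u i ≤ k → w i = a (u i - 1))
    (hbig : ∀ i < n, k < u i → a (k - 1) < w i)
    (hbb : ∀ i < n, ∀ j < n, k < u i → k < u j → (u i < u j ↔ w i < w j)) :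
    SameOrder n u w := by
  have hle : ∀ i < n, u i ≤ k → w i ≤ a (k - 1) := fun i hi hik => by
    have := hu i hi
    rw [hsmall i hi hik]
    exact ha.monotoneOn (show u i - 1 < k by omega) (show k - 1 < k by omega) (by omega)
  intro i hi j hj
  rcases le_or_gt (u i) k with hik | hik <;> rcases le_or_gt (u j) k with hjk | hjk
  · have := hu i hi; have := hu j hj
    rw [hsmall i hi hik, hsmall j hj hjk,
      ha.lt_iff_lt (show u i - 1 < k by omega) (show u j - 1 < k by omega)]
    omega
  · have := hle i hi hik; have := hbig j hj hjk
    exact iff_of_true (by omega) (by omega)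
  · have := hle j hj hjk; have := hbig i hi hik
    exact iff_of_false (by omega) (by omega)
  · exact hbb i hi j hj hik hjk

def IsRising (π : List ℕ) (k : ℕ) (a : ℕ → ℕ) : Prop :=
  StrictMonoOn a (Iio k) ∧ 1 ≤ a 0 ∧ a (k - 1) ≤ pmax π π.length

section IsRising

variable {π : List ℕ} {k : ℕ} {a : ℕ → ℕ} (ha : IsRising π k a)
include ha

lemma IsRising.le_top {i : ℕ} (hi : i < k) : a i ≤ a (k - 1) :=
  ha.1.monotoneOn hi (show k - 1 < k by omega) (by omega)

lemma IsRising.one_le {i : ℕ} (hi : i < k) : 1 ≤ a i :=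
  ha.2.1.trans (ha.1.monotoneOn (show 0 < k by omega) hi (Nat.zero_le i))

lemma IsRising.raise (hk : 2 ≤ k) :
    IsRising π k (fun i => if i = 0 then 1 else a (i - 1) + 1) := by
  refine ⟨fun i hi j hj hij => ?_, by simp, ?_⟩
  · simp only [mem_Iio] at hi hj
    dsimp only
    split_ifs with h1 h2 h2
    · omega
    · have := ha.one_le (show j - 1 < k by omega); omega
    · omega
    · have := ha.1 (show i - 1 < k by omega) (show j - 1 < k by omega) (by omega); omega
  · simp only [if_neg (show k - 1 ≠ 0 by omega), show k - 1 - 1 = k - 2 by omega]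
    exact (ha.1 (show k - 2 < k by omega) (show k - 1 < k by omega) (by omega)).trans_le ha.2.2

lemma IsRising.lower (hk : 2 ≤ k) :
    IsRising π k (fun i => if i = k - 1 then a (k - 1) else a (i + 1) - 1) := by
  refine ⟨fun i hi j hj hij => ?_, ?_, by simpa using ha.2.2⟩
  · simp only [mem_Iio] at hi hj
    dsimp only
    have := ha.one_le (show i + 1 < k by omega)
    split_ifs with h1 h2
    · omega
    · omega
    · have := ha.le_top (show i + 1 < k by omega); omega
    · have := ha.1 (show i + 1 < k by omega) (show j + 1 < k by omega) (by omega); omega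
  · have := ha.1 (show 0 < k by omega) (show 1 < k by omega) (by omega)
    have := ha.2.1
    simp only [if_neg (show 0 ≠ k - 1 by omega), zero_add]
    omega

end IsRising

-- `a (k - 1) ≤ pmax π (f j)` says that the value `a (k - 1)` occurs before position `f j`.
def IsTail (π X : List ℕ) (k : ℕ) (a f : ℕ → ℕ) : Prop :=
  StrictMonoOn f (Iio X.length) ∧
    (∀ j < X.length, f j < π.length ∧ a (k - 1) ≤ pmax π (f j) ∧
      (entry X j ≤ k → entry π (f j) = a (entry X j - 1)) ∧
      (k < entry X j → a (k - 1) < entry π (f j))) ∧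
    ∀ i < X.length, ∀ j < X.length, k < entry X i → k < entry X j →
      (entry X i < entry X j ↔ entry π (f i) < entry π (f j))

section iotaAppend

variable {π X : List ℕ} {k : ℕ} (hk : 1 ≤ k) (hπ : IsCanonicalSeq π)
  (hX : ∀ j < X.length, 1 ≤ entry X j)
include hk hπ hX

lemma IsOccurrence.isRising_isTail {e : ℕ → ℕ} (he : IsOccurrence π (iota k ++ X) e) :
    IsRising π k (fun i => entry π (e i)) ∧
      IsTail π X k (fun i => entry π (e i)) (fun j => e (k + j)) := by
  obtain ⟨he, helen, hiso⟩ := he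
  have hlen : (iota k ++ X).length = k + X.length := by simp
  rw [hlen] at he helen hiso
  have hiso' : ∀ i < k + X.length, ∀ j < k + X.length,
      (entry (iota k ++ X) i < entry (iota k ++ X) j ↔ entry π (e i) < entry π (e j)) := hiso
  have hprefix : ∀ i < k, entry (iota k ++ X) i = i + 1 := fun i hi => by
    rw [entry_iota_append, if_pos hi]
  have htail : ∀ j, entry (iota k ++ X) (k + j) = entry X j := fun j => by
    rw [entry_iota_append, if_neg (by omega), Nat.add_sub_cancel_left]
  refine ⟨⟨fun i hi j hj hij => ?_, ?_, ?_⟩, fun i hi j hj hij => ?_, fun j hj => ?_,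
    fun i hi j hj _ _ => ?_⟩
  · simp only [mem_Iio] at hi hj
    have := (hiso' i (by omega) j (by omega)).1
    rw [hprefix i hi, hprefix j hj] at this
    exact this (by omega)
  · exact hπ.one_le_entry (helen 0 (by omega))
  · exact entry_le_pmax (helen _ (by omega)) (helen _ (by omega))
  · exact he (show k + i < k + X.length by simp at hi; omega)
      (show k + j < k + X.length by simp at hj; omega) (by omega)
  · refine ⟨helen _ (by omega), entry_le_pmax (he (show k - 1 < k + X.length by omega)
      (show k + j < k + X.length by omega) (by omega)) (helen _ (by omega)), fun hjk => ?_,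
      fun hjk => ?_⟩
    · have := hX j hj
      have hsame : entry (iota k ++ X) (entry X j - 1) = entry X j := by
        rw [hprefix _ (by omega)]; omega
      have h1 := hiso' (entry X j - 1) (by omega) (k + j) (by omega)
      have h2 := hiso' (k + j) (by omega) (entry X j - 1) (by omega)
      rw [hsame, htail] at h1 h2
      show entry π (e (k + j)) = entry π (e (entry X j - 1))
      omega
    · have h1 := hiso' (k - 1) (by omega) (k + j) (by omega)
      rw [hprefix _ (by omega), Nat.sub_add_cancel hk, htail] at h1
      exact h1.1 hjk
  · have := hiso' (k + i) (by omega) (k + j) (by omega)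
    rwa [htail, htail] at this

omit hk in
lemma isOccurrence_iota_append {a f : ℕ → ℕ} (ha : IsRising π k a) (hf : IsTail π X k a f) :
    IsOccurrence π (iota k ++ X) (fun i => if i < k then π.idxOf (a i) else f (i - k)) := by
  obtain ⟨hf, hfX, hfbb⟩ := hf
  have hlen : (iota k ++ X).length = k + X.length := by simp
  have hmem : ∀ i < k, a i ∈ Icc 1 (pmax π π.length) :=
    fun i hi => ⟨ha.one_le hi, (ha.le_top hi).trans ha.2.2⟩
  have hval : ∀ i < k, entry π (π.idxOf (a i)) = a i :=
    fun i hi => entry_idxOf (hπ.mem (hmem i hi).1 (hmem i hi).2)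
  refine ⟨fun i hi j hj hij => ?_, fun i hi => ?_, ?_⟩
  · simp only [mem_Iio, hlen] at hi hj
    dsimp only
    split_ifs with h1 h2 h2
    · exact hπ.idxOf_strictMonoOn (hmem i h1) (hmem j h2) (ha.1 h1 h2 hij)
    · exact hπ.idxOf_lt (ha.one_le h1) ((ha.le_top h1).trans (hfX _ (by omega)).2.1)
    · omega
    · exact hf (show i - k < X.length by omega) (show j - k < X.length by omega) (by omega)
  · rw [hlen] at hi
    dsimp only
    split_ifs with h
    · exact List.idxOf_lt_length_of_mem (hπ.mem (hmem i h).1 (hmem i h).2)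
    · exact (hfX _ (by omega)).1
  rw [hlen]
  refine sameOrder_of_levels ha.1 (fun i hi => ?_) (fun i hi hik => ?_) (fun i hi hik => ?_)
    (fun i hi j hj hik hjk => ?_)
  · rw [entry_iota_append]
    split_ifs with h
    · omega
    · exact hX _ (by omega)
  · rw [entry_iota_append] at hik ⊢
    dsimp only
    split_ifs at hik ⊢ with h
    · rw [hval i h]; rfl
    · exact (hfX _ (by omega)).2.2.1 hik
  · rw [entry_iota_append] at hik
    dsimp only
    split_ifs at hik ⊢ with h
    · omega
    · exact (hfX _ (by omega)).2.2.2 hik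
  · simp only [entry_iota_append k X i, entry_iota_append k X j] at hik hjk ⊢
    split_ifs at hik hjk ⊢ with h1 h2 h2 <;> try omega
    exact hfbb _ (by omega) _ (by omega) hik hjk

/-- In a canonical sequence the `12⋯k` of an occurrence can always be moved to the first
occurrences of its values, so only these values matter. -/
lemma containsPat_iota_append_iff :
    ContainsPat π (iota k ++ X) ↔ ∃ a, IsRising π k a ∧ ∃ f, IsTail π X k a f := by
  rw [containsPat_iff_exists_isOccurrence]
  constructor
  · rintro ⟨e, he⟩
    obtain ⟨ha, hf⟩ := he.isRising_isTail hk hπ hX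
    exact ⟨_, ha, _, hf⟩
  · rintro ⟨a, ha, f, hf⟩
    exact ⟨_, isOccurrence_iota_append hπ hX ha hf⟩

end iotaAppend

lemma IsEmbAbove.le_pmax {τ π : List ℕ} {v : ℕ} {P : ℕ → Prop} {g : ℕ → ℕ}
    (hπ : IsCanonicalSeq π) (hg : IsEmbAbove τ π v P g) {x : ℕ} (hx : x < τ.length) :
    v ≤ pmax π (g x) := by
  have := hπ.entry_le_pmax_succ (hg.2.1 x hx).1
  have := (hg.2.1 x hx).2.2
  omega

def Places (π W : List ℕ) (k : ℕ) (a r : ℕ → ℕ) : Prop :=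
  StrictMonoOn r (Iio W.length) ∧
    ∀ j < W.length, r j < π.length ∧ a (k - 1) ≤ pmax π (r j) ∧
      entry π (r j) = a (entry W j - 1)

lemma entry_map_add_append (τ W : List ℕ) (k j : ℕ) :
    entry (τ.map (· + k) ++ W) j =
      if j < τ.length then entry τ j + k else entry W (j - τ.length) := by
  split_ifs with h
  · rw [entry_append_left (by simpa using h), entry_map_add h]
  · rw [entry_append_right (by simp; omega), List.length_map]

lemma entry_append_map_add {τ W : List ℕ} {k j : ℕ} (hj : j < W.length + τ.length) :
    entry (W ++ τ.map (· + k)) j =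
      if j < W.length then entry W j else entry τ (j - W.length) + k := by
  split_ifs with h
  · rw [entry_append_left h]
  · rw [entry_append_right (by omega), entry_map_add (by omega)]

section split

variable {π τ W : List ℕ} {k : ℕ} {a : ℕ → ℕ} (hπ : IsCanonicalSeq π)
  (hτ : ∀ x < τ.length, 1 ≤ entry τ x) (hW : ∀ j < W.length, entry W j ≤ k)
include hπ hτ hW

omit hπ in
lemma IsTail.split_before {f : ℕ → ℕ} (hf : IsTail π (τ.map (· + k) ++ W) k a f) :
    Places π W k a (fun j => f (τ.length + j)) ∧
      EmbedsAbove τ .before π (a (k - 1)) (if τ.length = 0 then 0 else f (τ.length - 1) + 1) ∧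
      ∀ j < W.length, ¬ Side.before.Rel (f (τ.length + j))
        (if τ.length = 0 then 0 else f (τ.length - 1) + 1) := by
  obtain ⟨hf, hfX, hfbb⟩ := hf
  set t := τ.length
  simp only [List.length_append, List.length_map] at hf hfX hfbb
  have hXτ : ∀ x < t, entry (τ.map (· + k) ++ W) x = entry τ x + k := fun x hx => by
    rw [entry_map_add_append, if_pos hx]
  have hXW : ∀ j, entry (τ.map (· + k) ++ W) (t + j) = entry W j := fun j => by
    rw [entry_map_add_append, if_neg (by omega), Nat.add_sub_cancel_left]
  have hbig : ∀ x < t, k < entry (τ.map (· + k) ++ W) x := fun x hx => by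
    rw [hXτ x hx]; have := hτ x hx; omega
  refine ⟨⟨fun i hi j hj hij => ?_, fun j hj => ?_⟩,
    ⟨f, fun i hi j hj hij => ?_, fun x hx => ?_, fun x hx y hy => ?_⟩, fun j hj => ?_⟩
  · exact hf (show t + i < t + W.length by simp at hi; omega)
      (show t + j < t + W.length by simp at hj; omega) (by omega)
  · obtain ⟨h1, h2, h3, -⟩ := hfX (t + j) (by omega)
    exact ⟨h1, h2, hXW j ▸ h3 (hXW j ▸ hW j hj)⟩
  · exact hf (show i < t + W.length by simp at hi; omega)
      (show j < t + W.length by simp at hj; omega) hij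
  · refine ⟨(hfX x (by omega)).1, ?_, (hfX x (by omega)).2.2.2 (hbig x hx)⟩
    show f x < if t = 0 then 0 else f (t - 1) + 1
    rw [if_neg (by omega)]
    have := hf.monotoneOn (show x < t + W.length by omega)
      (show t - 1 < t + W.length by omega) (by omega)
    omega
  · have := hfbb x (by omega) y (by omega) (hbig x hx) (hbig y hy)
    rwa [hXτ x hx, hXτ y hy, Nat.add_lt_add_iff_right] at this
  · show ¬ f (t + j) < if t = 0 then 0 else f (t - 1) + 1
    split_ifs
    · omega
    · have := hf (show t - 1 < t + W.length by omega)
        (show t + j < t + W.length by omega) (by omega)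
      omega

lemma isTail_before {r g : ℕ → ℕ} {q : ℕ} (hr : Places π W k a r)
    (hg : IsEmbAbove τ π (a (k - 1)) (Side.before.Rel · q) g)
    (hq : ∀ j < W.length, ¬ Side.before.Rel (r j) q) :
    IsTail π (τ.map (· + k) ++ W) k a
      (fun j => if j < τ.length then g j else r (j - τ.length)) := by
  obtain ⟨hr, hrW⟩ := hr
  have ⟨hgmono, hgpos, hgiso⟩ := hg
  have hsmall : ∀ j, τ.length ≤ j → entry (τ.map (· + k) ++ W) j = entry W (j - τ.length) :=
    fun j hj => by rw [entry_map_add_append, if_neg (by omega)]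
  simp only [Side.Rel] at hgpos hq
  refine ⟨fun i hi j hj hij => ?_, fun j hj => ?_, fun i hi j hj hik hjk => ?_⟩ <;>
    simp only [mem_Iio, List.length_append, List.length_map] at *
  · split_ifs with h1 h2 h2
    · exact hgmono h1 h2 hij
    · have := (hgpos i h1).2.1; have := hq (j - τ.length) (by omega); omega
    · omega
    · exact hr (show i - τ.length < W.length by omega) (show j - τ.length < W.length by omega)
        (by omega)
  · rw [entry_map_add_append]
    split_ifs with h
    · obtain ⟨h1, -, h3⟩ := hgpos j h
      exact ⟨h1, hg.le_pmax hπ h, fun hjk => by have := hτ j h; omega, fun _ => h3⟩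
    · obtain ⟨h1, h2, h3⟩ := hrW (j - τ.length) (by omega)
      exact ⟨h1, h2, fun _ => h3, fun hjk => by have := hW (j - τ.length) (by omega); omega⟩
  · have hit : i < τ.length := by
      by_contra h; rw [hsmall i (by omega)] at hik; have := hW (i - τ.length) (by omega); omega
    have hjt : j < τ.length := by
      by_contra h; rw [hsmall j (by omega)] at hjk; have := hW (j - τ.length) (by omega); omega
    rw [entry_map_add_append, entry_map_add_append, if_pos hit, if_pos hjt, if_pos hit, if_pos hjt,
      Nat.add_lt_add_iff_right]
    exact hgiso i hit j hjt

omit hπ in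
lemma IsTail.split_after {f : ℕ → ℕ} (ha : 1 ≤ a (k - 1))
    (hf : IsTail π (W ++ τ.map (· + k)) k a f) :
    Places π W k a f ∧
      EmbedsAbove τ .after π (a (k - 1)) (if W.length = 0 then 0 else f (W.length - 1)) ∧
      ∀ j < W.length, ¬ Side.after.Rel (f j) (if W.length = 0 then 0 else f (W.length - 1)) := by
  obtain ⟨hf, hfX, hfbb⟩ := hf
  set l := W.length
  simp only [List.length_append, List.length_map] at hf hfX hfbb
  have hXW : ∀ j < l, entry (W ++ τ.map (· + k)) j = entry W j := fun j hj =>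
    entry_append_left hj
  have hXτ : ∀ x < τ.length, entry (W ++ τ.map (· + k)) (l + x) = entry τ x + k := fun x hx => by
    rw [entry_append_map_add (by omega), if_neg (by omega), Nat.add_sub_cancel_left]
  have hbig : ∀ x < τ.length, k < entry (W ++ τ.map (· + k)) (l + x) := fun x hx => by
    rw [hXτ x hx]; have := hτ x hx; omega
  refine ⟨⟨fun i hi j hj hij => ?_, fun j hj => ?_⟩,
    ⟨fun x => f (l + x), fun i hi j hj hij => ?_, fun x hx => ?_, fun x hx y hy => ?_⟩,
    fun j hj => ?_⟩
  · exact hf (show i < l + τ.length by simp at hi; omega)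
      (show j < l + τ.length by simp at hj; omega) hij
  · obtain ⟨h1, h2, h3, -⟩ := hfX j (by omega)
    exact ⟨h1, h2, hXW j hj ▸ h3 (hXW j hj ▸ hW j hj)⟩
  · exact hf (show l + i < l + τ.length by simp at hi; omega)
      (show l + j < l + τ.length by simp at hj; omega) (by omega)
  · obtain ⟨h1, h2, -, h4⟩ := hfX (l + x) (by omega)
    refine ⟨h1, ?_, h4 (hbig x hx)⟩
    show (if l = 0 then 0 else f (l - 1)) < f (l + x)
    split_ifs
    · by_contra h0
      rw [show f (l + x) = 0 by omega, pmax_zero] at h2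
      omega
    · exact hf (show l - 1 < l + τ.length by omega) (show l + x < l + τ.length by omega)
        (by omega)
  · have := hfbb (l + x) (by omega) (l + y) (by omega) (hbig x hx) (hbig y hy)
    rwa [hXτ x hx, hXτ y hy, Nat.add_lt_add_iff_right] at this
  · show ¬ (if l = 0 then 0 else f (l - 1)) < f j
    rw [if_neg (by omega)]
    have := hf.monotoneOn (show j < l + τ.length by omega)
      (show l - 1 < l + τ.length by omega) (by omega)
    omega

lemma isTail_after {r g : ℕ → ℕ} {q : ℕ} (hr : Places π W k a r)
    (hg : IsEmbAbove τ π (a (k - 1)) (Side.after.Rel · q) g)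
    (hq : ∀ j < W.length, ¬ Side.after.Rel (r j) q) :
    IsTail π (W ++ τ.map (· + k)) k a
      (fun j => if j < W.length then r j else g (j - W.length)) := by
  obtain ⟨hr, hrW⟩ := hr
  have ⟨hgmono, hgpos, hgiso⟩ := hg
  have hlen : (W ++ τ.map (· + k)).length = W.length + τ.length := by simp
  have hsmall : ∀ j < W.length, entry (W ++ τ.map (· + k)) j = entry W j := fun j hj =>
    entry_append_left hj
  simp only [Side.Rel] at hgpos hq
  refine ⟨fun i hi j hj hij => ?_, fun j hj => ?_, fun i hi j hj hik hjk => ?_⟩ <;>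
    simp only [mem_Iio, hlen] at *
  · split_ifs with h1 h2 h2
    · exact hr h1 h2 hij
    · have := (hgpos (j - W.length) (by omega)).2.1; have := hq i h1; omega
    · omega
    · exact hgmono (show i - W.length < τ.length by omega)
        (show j - W.length < τ.length by omega) (by omega)
  · rw [entry_append_map_add (by omega)]
    split_ifs with h
    · obtain ⟨h1, h2, h3⟩ := hrW j h
      exact ⟨h1, h2, fun _ => h3, fun hjk => by have := hW j h; omega⟩
    · obtain ⟨h1, -, h3⟩ := hgpos (j - W.length) (by omega)
      exact ⟨h1, hg.le_pmax hπ (by omega),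
        fun hjk => by have := hτ (j - W.length) (by omega); omega,
        fun _ => h3⟩
  · have hil : W.length ≤ i := by
      by_contra h; rw [hsmall i (by omega)] at hik; have := hW i (by omega); omega
    have hjl : W.length ≤ j := by
      by_contra h; rw [hsmall j (by omega)] at hjk; have := hW j (by omega); omega
    rw [entry_append_map_add (by omega), entry_append_map_add (by omega),
      if_neg (by omega), if_neg (by omega), if_neg (by omega), if_neg (by omega),
      Nat.add_lt_add_iff_right]
    exact hgiso (i - W.length) (by omega) (j - W.length) (by omega)

lemma exists_isTail_before_iff :
    (∃ f, IsTail π (τ.map (· + k) ++ W) k a f) ↔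
      ∃ r, Places π W k a r ∧
        ∃ q, EmbedsAbove τ .before π (a (k - 1)) q ∧ ∀ j < W.length, ¬ Side.before.Rel (r j) q := by
  constructor
  · rintro ⟨f, hf⟩
    obtain ⟨hr, hq, hqr⟩ := hf.split_before hτ hW
    exact ⟨_, hr, _, hq, hqr⟩
  · rintro ⟨r, hr, q, ⟨g, hg⟩, hqr⟩
    exact ⟨_, isTail_before hπ hτ hW hr hg hqr⟩

lemma exists_isTail_after_iff (ha : 1 ≤ a (k - 1)) :
    (∃ f, IsTail π (W ++ τ.map (· + k)) k a f) ↔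
      ∃ r, Places π W k a r ∧
        ∃ q, EmbedsAbove τ .after π (a (k - 1)) q ∧ ∀ j < W.length, ¬ Side.after.Rel (r j) q := by
  constructor
  · rintro ⟨f, hf⟩
    obtain ⟨hr, hq, hqr⟩ := hf.split_after hτ hW ha
    exact ⟨_, hr, _, hq, hqr⟩
  · rintro ⟨r, hr, q, ⟨g, hg⟩, hqr⟩
    exact ⟨_, isTail_after hπ hτ hW hr hg hqr⟩

end split

def shape (τ : List ℕ) : Side → ℕ → List ℕ → List ℕ
  | .before, k, W => iota k ++ τ.map (· + k) ++ W
  | .after, k, W => iota k ++ W ++ τ.map (· + k)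

/-- An occurrence of `shape τ s k W`, recorded by the values `a` taken by `12⋯k`, the positions `r`
of the letters of `W`, and a position `q` separating them from the copy of `τ`. -/
def ShapeOccurs (τ : List ℕ) (s : Side) (k : ℕ) (W π : List ℕ) : Prop :=
  ∃ a, IsRising π k a ∧ ∃ r, Places π W k a r ∧
    ∃ q, EmbedsAbove τ s π (a (k - 1)) q ∧ ∀ j < W.length, ¬ s.Rel (r j) q

lemma containsPat_shape_iff {π τ W : List ℕ} {s : Side} {k : ℕ} (hk : 1 ≤ k)
    (hπ : IsCanonicalSeq π) (hτ : ∀ x < τ.length, 1 ≤ entry τ x)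
    (hW : ∀ j < W.length, 1 ≤ entry W j ∧ entry W j ≤ k) :
    ContainsPat π (shape τ s k W) ↔ ShapeOccurs τ s k W π := by
  have hWk : ∀ j < W.length, entry W j ≤ k := fun j hj => (hW j hj).2
  cases s with
  | before =>
    have hX : ∀ j < (τ.map (· + k) ++ W).length, 1 ≤ entry (τ.map (· + k) ++ W) j := by
      intro j hj
      rw [entry_map_add_append]
      split_ifs
      · omega
      · exact (hW _ (by simp at hj; omega)).1
    rw [shape, List.append_assoc, containsPat_iota_append_iff hk hπ hX]
    exact exists_congr fun a => and_congr_right fun _ => exists_isTail_before_iff hπ hτ hWk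
  | after =>
    have hX : ∀ j < (W ++ τ.map (· + k)).length, 1 ≤ entry (W ++ τ.map (· + k)) j := by
      intro j hj
      rw [entry_append_map_add (by simpa [add_comm] using hj)]
      split_ifs with h
      · exact (hW j h).1
      · omega
    rw [shape, List.append_assoc, containsPat_iota_append_iff hk hπ hX]
    exact exists_congr fun a => and_congr_right fun ha =>
      exists_isTail_after_iff hπ hτ hWk (ha.one_le (by omega))

section transfer

variable {τ π : List ℕ} {s : Side} (hπ : IsCanonicalSeq π)
include hπ

lemma isRising_shift_iff {k : ℕ} {a : ℕ → ℕ} : IsRising (shift τ s π) k a ↔ IsRising π k a := by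
  simp only [IsRising, length_shift, pmax_shift hπ]

omit hπ in
lemma entry_shift_of_lt {p v : ℕ} (hp : p < π.length) (hpv : entry π p < v)
    (hv : v ≤ pmax π p) (h : EmbedsAbove τ s π v p) :
    entry (shift τ s π) p = entry π p + 1 := by
  rw [shift, entry_rotate hp, cycleUp_of_lt (hpv.trans_le (le_threshold hv h))]

lemma entry_eq_of_entry_shift {p v y : ℕ} (hp : p < π.length) (hy : entry (shift τ s π) p = y)
    (h2 : 2 ≤ y) (hyv : y ≤ v) (hv : v ≤ pmax π p) (h : EmbedsAbove τ s π v p) :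
    entry π p = y - 1 := by
  rw [shift, entry_rotate hp] at hy
  exact eq_sub_one_of_cycleUp_eq (hπ.one_le_entry hp) hy h2 (hyv.trans (le_threshold hv h))

variable {k : ℕ} (hk : 2 ≤ k) {S : List ℕ} (hS : ∀ j < S.length, 1 ≤ entry S j ∧ entry S j ≤ k - 1)
include hk hS

/-- The letters of `S` take values `a (x - 1) < a (k - 1) ≤ threshold`, which `shift` raises by
one, and the new `12⋯k` takes the values `1, a 0 + 1, …, a (k - 2) + 1`. -/
lemma ShapeOccurs.shift_succ (h : ShapeOccurs τ s k S π) :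
    ShapeOccurs τ s k (S.map (· + 1)) (shift τ s π) := by
  obtain ⟨a, ha, r, ⟨hr, hrS⟩, q, hq, hqr⟩ := h
  have hv : 1 ≤ a (k - 1) := ha.one_le (by omega)
  have htop : a (k - 2) < a (k - 1) :=
    ha.1 (show k - 2 < k by omega) (show k - 1 < k by omega) (by omega)
  have hk1 : k - 1 - 1 = k - 2 := by omega
  refine ⟨fun i => if i = 0 then 1 else a (i - 1) + 1, (isRising_shift_iff hπ).2 (ha.raise hk),
    r, ⟨by simpa using hr, fun j hj => ?_⟩,
    q, ?_, fun j hj => hqr j (by simpa using hj)⟩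
  · rw [List.length_map] at hj
    obtain ⟨h1, h2, h3⟩ := hrS j hj
    have hSj := hS j hj
    have hlt : a (entry S j - 1) < a (k - 1) :=
      ha.1 (show entry S j - 1 < k by omega) (show k - 1 < k by omega) (by omega)
    refine ⟨by simpa using h1, ?_, ?_⟩
    · simp only [pmax_shift hπ, if_neg (show k - 1 ≠ 0 by omega), hk1]
      omega
    · rw [entry_shift_of_lt h1 (h3 ▸ hlt) h2 (hq.of_not_rel (hqr j hj)), h3, entry_map_add hj,
        Nat.add_sub_cancel]
      exact (if_neg (show entry S j ≠ 0 by omega)).symm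
  · refine ((embedsAbove_shift_iff hπ hv).2 hq).mono_value ?_
    simp only [if_neg (show k - 1 ≠ 0 by omega), hk1]
    omega

lemma ShapeOccurs.of_shift_succ (h : ShapeOccurs τ s k (S.map (· + 1)) (shift τ s π)) :
    ShapeOccurs τ s k S π := by
  obtain ⟨a, ha, r, ⟨hr, hrS⟩, q, hq, hqr⟩ := h
  have hv : 1 ≤ a (k - 1) := ha.one_le (by omega)
  have hq' := (embedsAbove_shift_iff hπ hv).1 hq
  refine ⟨fun i => if i = k - 1 then a (k - 1) else a (i + 1) - 1,
    ((isRising_shift_iff hπ).1 ha).lower hk, r, ⟨by simpa using hr, fun j hj => ?_⟩,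
    q, by simpa using hq', fun j hj => hqr j (by simpa using hj)⟩
  have hj' : j < (S.map (· + 1)).length := by simpa using hj
  obtain ⟨h1, h2, h3⟩ := hrS j hj'
  have hSj := hS j hj
  rw [entry_map_add hj, Nat.add_sub_cancel] at h3
  rw [length_shift] at h1
  rw [pmax_shift hπ] at h2
  have h2' : 2 ≤ a (entry S j) := by
    have := ha.1 (show 0 < k by omega) (show entry S j < k by omega) (by omega)
    have := ha.2.1
    omega
  refine ⟨h1, by simpa using h2, ?_⟩
  show _ = if entry S j - 1 = k - 1 then a (k - 1) else a (entry S j - 1 + 1) - 1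
  rw [if_neg (by omega), Nat.sub_add_cancel hSj.1]
  exact entry_eq_of_entry_shift hπ h1 h3 h2' (ha.le_top (by omega)) h2
    (hq'.of_not_rel (hqr j hj'))

end transfer

theorem patEquiv_shape {τ : List ℕ} (hτ : ∀ x < τ.length, 1 ≤ entry τ x) (s : Side) {k : ℕ}
    (hk : 2 ≤ k) {S : List ℕ} (hS : ∀ j < S.length, 1 ≤ entry S j ∧ entry S j ≤ k - 1) :
    PatEquiv (shape τ s k S) (shape τ s k (S.map (· + 1))) := by
  have hS' : ∀ j < (S.map (· + 1)).length, 1 ≤ entry (S.map (· + 1)) j ∧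
      entry (S.map (· + 1)) j ≤ k := fun j hj => by
    rw [List.length_map] at hj
    rw [entry_map_add hj]
    have := hS j hj
    omega
  refine pAvoid_eq_of_injOn (shift τ s) (length_shift τ s) (fun _ => isCanonicalSeq_shift)
    (shift_injOn τ s) fun π hπ => ?_
  rw [containsPat_shape_iff (by omega) hπ hτ fun j hj => ⟨(hS j hj).1, by have := hS j hj; omega⟩,
    containsPat_shape_iff (by omega) (isCanonicalSeq_shift hπ) hτ hS']
  exact ⟨ShapeOccurs.shift_succ hπ hk hS, ShapeOccurs.of_shift_succ hπ hk hS⟩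

/-- For k ≥ 2, a sequence S over {1,…,k−1} and a canonical
sequence τ: 1…k(τ+k)S ∼ 1…k(τ+k)(S+1) and 1…kS(τ+k) ∼ 1…k(S+1)(τ+k). -/
theorem statement4 (k : ℕ) (hk : 2 ≤ k) (S : List ℕ)
    (hS : ∀ x ∈ S, 1 ≤ x ∧ x ≤ k - 1) (τ : List ℕ) (hτ : IsCanonicalSeq τ) :
    PatEquiv (iota k ++ τ.map (· + k) ++ S)
             (iota k ++ τ.map (· + k) ++ S.map (· + 1)) ∧
    PatEquiv (iota k ++ S ++ τ.map (· + k))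
             (iota k ++ S.map (· + 1) ++ τ.map (· + k)) := by
  have hτ' : ∀ x < τ.length, 1 ≤ entry τ x := fun x hx => hτ.one_le_entry hx
  have hS' : ∀ j < S.length, 1 ≤ entry S j ∧ entry S j ≤ k - 1 := fun j hj =>
    entry_eq_getElem hj ▸ hS _ (List.getElem_mem hj)
  exact ⟨patEquiv_shape hτ' .before hk hS', patEquiv_shape hτ' .after hk hS'⟩
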